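/- The set of reduced elements of an Artin monoid is closed under left and right division: if g is reduced and g = uv in A_S^+, then both u and v are reduced. -/

import Mathlib

open scoped Pointwise

namespace ArtinPaper

/-- A Coxeter/Artin matrix: `m s t = 0` encodes `m_{s,t} = ∞`. -/
structure ArtinMatrix (S : Type*) where
  m : S → S → ℕ
  symm : ∀ s t, m s t = m t s
  diag : ∀ s, m s s = 1
  off_ne_one : ∀ s t, s ≠ t → m s t ≠ 1

variable {S : Type*} {S' : Type*}

/-- The alternating word `s t s t ⋯` with `k` letters. -/
def altWord (s t : S) : ℕ → List S
  | 0 => []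
  | k + 1 => s :: altWord t s k

/-- The alternating product `a b a b ⋯` with `k` factors. -/
def altProd {A : Type*} [Monoid A] (a b : A) : ℕ → A
  | 0 => 1
  | k + 1 => a * altProd b a k

/-- The braid relations as a relation on the free monoid. -/
def braidRel (M : ArtinMatrix S) (x y : FreeMonoid S) : Prop :=
  ∃ s t : S, s ≠ t ∧ M.m s t ≠ 0 ∧
    x = FreeMonoid.ofList (altWord s t (M.m s t)) ∧
    y = FreeMonoid.ofList (altWord t s (M.m s t))

def artinCon (M : ArtinMatrix S) : Con (FreeMonoid S) := conGen (braidRel M)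

/-- The positive Artin monoid `A_S^+`. -/
def ArtinMonoid (M : ArtinMatrix S) := (artinCon M).Quotient

instance (M : ArtinMatrix S) : Monoid (ArtinMonoid M) :=
  inferInstanceAs (Monoid (artinCon M).Quotient)

/-- The element of the Artin monoid represented by a positive word. -/
def mk (M : ArtinMatrix S) (w : List S) : ArtinMonoid M :=
  (artinCon M).mk' (FreeMonoid.ofList w)

/-- The generator of `A_S^+` associated to `s ∈ S`. -/
def gen (M : ArtinMatrix S) (s : S) : ArtinMonoid M := mk M [s]

/-- A word contains the square of a generator. -/
def HasSquare (w : List S) : Prop := ∃ (u v : List S) (s : S), w = u ++ s :: s :: v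

/-- An element of the Artin monoid is reduced (square free) if no positive word
representing it contains the square of a generator. -/
def Reduced (M : ArtinMatrix S) (g : ArtinMonoid M) : Prop :=
  ∀ w : List S, mk M w = g → ¬ HasSquare w

/-- Right divisibility: `a` right-divides `b`. (Note: `a ∣ b` is left divisibility.) -/
def RDvd {A : Type*} [Monoid A] (a b : A) : Prop := ∃ c, b = c * a

/-- `d` is a left gcd of `a` and `b` (for left divisibility `∣`). -/
def IsLeftGcd {A : Type*} [Monoid A] (d a b : A) : Prop :=
  d ∣ a ∧ d ∣ b ∧ ∀ e, e ∣ a → e ∣ b → e ∣ d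

/-- `l` is a left lcm of `a` and `b` (for left divisibility `∣`). -/
def IsLeftLcm {A : Type*} [Monoid A] (l a b : A) : Prop :=
  a ∣ l ∧ b ∣ l ∧ ∀ e, a ∣ e → b ∣ e → l ∣ e

/-- `d` is a right gcd of `a` and `b`. -/
def IsRightGcd {A : Type*} [Monoid A] (d a b : A) : Prop :=
  RDvd d a ∧ RDvd d b ∧ ∀ e, RDvd e a → RDvd e b → RDvd e d

/-- `h` is the head `α(g)`: the greatest reduced left divisor of `g`. -/
def IsHead (M : ArtinMatrix S) (h g : ArtinMonoid M) : Prop :=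
  Reduced M h ∧ h ∣ g ∧ ∀ h', Reduced M h' → h' ∣ g → h' ∣ h

/-- The relations `s·s = 1` on the free monoid. -/
def squareRel (x y : FreeMonoid S) : Prop :=
  ∃ s : S, x = FreeMonoid.ofList [s, s] ∧ y = 1

def coxCon (M : ArtinMatrix S) : Con (FreeMonoid S) :=
  conGen (fun x y => braidRel M x y ∨ squareRel x y)

/-- The Coxeter group `W_S`, realized as the quotient monoid of the free monoid by the
braid relations together with `s² = 1` (as a set it is the Coxeter group). -/
def CoxMonoid (M : ArtinMatrix S) := (coxCon M).Quotient

instance (M : ArtinMatrix S) : Monoid (CoxMonoid M) :=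
  inferInstanceAs (Monoid (coxCon M).Quotient)

def coxmk (M : ArtinMatrix S) (w : List S) : CoxMonoid M :=
  (coxCon M).mk' (FreeMonoid.ofList w)

/-- The canonical projection `i : A_S^+ → W_S`. -/
def proj (M : ArtinMatrix S) : ArtinMonoid M →* CoxMonoid M :=
  Con.lift _ (coxCon M).mk' (by
    refine Con.conGen_le.mpr (fun x y h => ?_)
    show (coxCon M).mk' x = (coxCon M).mk' y
    exact (Con.eq _).mpr (ConGen.Rel.of x y (Or.inl h)))

/-- The length of an element of `A_S^+` (length of any representing word). -/
noncomputable def lengthOf (M : ArtinMatrix S) (g : ArtinMonoid M) : ℕ :=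
  sInf {n | ∃ w : List S, mk M w = g ∧ w.length = n}

/-- The standard parabolic submonoid `A_T^+`. -/
def parabolicM (M : ArtinMatrix S) (T : Set S) : Submonoid (ArtinMonoid M) :=
  Submonoid.closure (gen M '' T)

/-- Restriction of the Coxeter matrix to a subset. -/
def ArtinMatrix.restrict (M : ArtinMatrix S) (T : Set S) : ArtinMatrix T where
  m a b := M.m a b
  symm a b := M.symm a b
  diag a := M.diag a
  off_ne_one a b h := M.off_ne_one a b (fun he => h (Subtype.ext he))

/-- `T ⊆ S` is of spherical type iff the Coxeter group `W_T` is finite. -/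
def Spherical (M : ArtinMatrix S) (T : Set S) : Prop :=
  Finite (CoxMonoid (M.restrict T))

/-- `Δ` is the Garside element `Δ_T`, i.e. the left lcm of the generators in `T`. -/
def IsDeltaOf (M : ArtinMatrix S) (Δ : ArtinMonoid M) (T : Set S) : Prop :=
  (∀ t ∈ T, gen M t ∣ Δ) ∧ ∀ g : ArtinMonoid M, (∀ t ∈ T, gen M t ∣ g) → Δ ∣ g

/-- The data of an LCM-homomorphism (monoid level): a map `p` satisfying (L0)–(L3),
together with the Garside elements `Δ_{p(s)}`. -/
structure LCMHom (M : ArtinMatrix S) (M' : ArtinMatrix S') where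
  p : S → Set S'
  p_ne : ∀ s, (p s).Nonempty
  L0 : ∀ s t, s ≠ t → Disjoint (p s) (p t)
  L1 : ∀ s, Spherical M' (p s)
  Δ : S → ArtinMonoid M'
  hΔ : ∀ s, IsDeltaOf M' (Δ s) (p s)
  L2 : ∀ s t, s ≠ t → M.m s t ≠ 0 →
    altProd (Δ s) (Δ t) (M.m s t) = altProd (Δ t) (Δ s) (M.m s t) ∧
    IsLeftLcm (altProd (Δ s) (Δ t) (M.m s t)) (Δ s) (Δ t)
  L3 : ∀ s t, s ≠ t → M.m s t = 0 →
    (∀ u ∈ p s, ¬ Spherical M' (insert u (p t))) ∧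
    (∀ u ∈ p t, ¬ Spherical M' (insert u (p s)))

def pSet {M : ArtinMatrix S} {M' : ArtinMatrix S'} (P : LCMHom M M') (X : Set S) : Set S' :=
  ⋃ s ∈ X, P.p s

/-- A (general) lcm-homomorphism: sends generators to nontrivial elements
and preserves lcms of pairs of generators (with the convention `φ(∞) = ∞`). -/
def IsLcmHom (M : ArtinMatrix S) (M' : ArtinMatrix S')
    (φ : ArtinMonoid M →* ArtinMonoid M') : Prop :=
  (∀ s : S, φ (gen M s) ≠ 1) ∧
  (∀ s t : S, ∀ l, IsLeftLcm l (gen M s) (gen M t) →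
      IsLeftLcm (φ l) (φ (gen M s)) (φ (gen M t))) ∧
  (∀ s t : S, (∃ l, IsLeftLcm l (φ (gen M s)) (φ (gen M t))) →
      ∃ l, IsLeftLcm l (gen M s) (gen M t))

/-- `p_≺(s)`: the generators left-dividing `φ(s)`. -/
def pL {M : ArtinMatrix S} {M' : ArtinMatrix S'}
    (φ : ArtinMonoid M →* ArtinMonoid M') (s : S) : Set S' :=
  {t : S' | gen M' t ∣ φ (gen M s)}

/-- `p_≻(s)`: the generators right-dividing `φ(s)`. -/
def pR {M : ArtinMatrix S} {M' : ArtinMatrix S'}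
    (φ : ArtinMonoid M →* ArtinMonoid M') (s : S) : Set S' :=
  {t : S' | RDvd (gen M' t) (φ (gen M s))}

/-- A symmetric lcm-homomorphism: `p_≺(s) = p_≻(s)` for all `s`. -/
def SymmetricHom {M : ArtinMatrix S} {M' : ArtinMatrix S'}
    (φ : ArtinMonoid M →* ArtinMonoid M') : Prop :=
  ∀ s : S, pL φ s = pR φ s

/-- QF-injectivity: reduced elements map injectively to reduced elements. -/
def QFInjective (M : ArtinMatrix S) (M' : ArtinMatrix S')
    (φ : ArtinMonoid M →* ArtinMonoid M') : Prop :=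
  (∀ g, Reduced M g → Reduced M' (φ g)) ∧ Set.InjOn φ {g | Reduced M g}


/-- The word `w` viewed in the free group. -/
def grpWord (w : List S) : FreeGroup S := (w.map FreeGroup.of).prod

/-- The braid relators in the free group. -/
def braidRelsGrp (M : ArtinMatrix S) : Set (FreeGroup S) :=
  {r | ∃ s t : S, s ≠ t ∧ M.m s t ≠ 0 ∧
      r = grpWord (altWord s t (M.m s t)) * (grpWord (altWord t s (M.m s t)))⁻¹}

/-- The Artin–Tits group `A_S`. -/
def ArtinGroup (M : ArtinMatrix S) := PresentedGroup (braidRelsGrp M)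

instance (M : ArtinMatrix S) : Group (ArtinGroup M) :=
  inferInstanceAs (Group (PresentedGroup (braidRelsGrp M)))

/-- The generator of `A_S` associated to `s ∈ S`. -/
def ggen (M : ArtinMatrix S) (s : S) : ArtinGroup M := PresentedGroup.of s

/-- The positive monoid `A_S^+` inside `A_S`. -/
def posMonoid (M : ArtinMatrix S) : Submonoid (ArtinGroup M) :=
  Submonoid.closure (Set.range (ggen M))

/-- Left divisibility in the positive cone of `A_S`. -/
def PosDvd (M : ArtinMatrix S) (a b : ArtinGroup M) : Prop :=
  ∃ c ∈ posMonoid M, b = a * c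

/-- `l` is the left lcm of `a` and `b` for positive divisibility. -/
def IsLcmPos (M : ArtinMatrix S) (l a b : ArtinGroup M) : Prop :=
  PosDvd M a l ∧ PosDvd M b l ∧ ∀ e, PosDvd M a e → PosDvd M b e → PosDvd M l e

/-- The standard parabolic subgroup `A_T`. -/
def parabolic (M : ArtinMatrix S) (T : Set S) : Subgroup (ArtinGroup M) :=
  Subgroup.closure (ggen M '' T)

/-- The coset `x·A_X`, a vertex of the Deligne complex when `X` is spherical. -/
def VCoset (M : ArtinMatrix S) (x : ArtinGroup M) (X : Set S) : Set (ArtinGroup M) :=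
  x • (parabolic M X : Set (ArtinGroup M))

/-- `Δ` is the Garside element `Δ_T` of the parabolic on `T`, inside the group:
a positive element which is the left lcm of the generators in `T`. -/
def IsDeltaOfG (M : ArtinMatrix S) (Δ : ArtinGroup M) (T : Set S) : Prop :=
  Δ ∈ posMonoid M ∧ (∀ t ∈ T, PosDvd M (ggen M t) Δ) ∧
    ∀ g ∈ posMonoid M, (∀ t ∈ T, PosDvd M (ggen M t) g) → PosDvd M Δ g

/-- The data of an LCM-homomorphism, group level. -/
structure LCMHomG (M : ArtinMatrix S) (M' : ArtinMatrix S') where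
  p : S → Set S'
  p_ne : ∀ s, (p s).Nonempty
  L0 : ∀ s t, s ≠ t → Disjoint (p s) (p t)
  L1 : ∀ s, Spherical M' (p s)
  Δ : S → ArtinGroup M'
  hΔ : ∀ s, IsDeltaOfG M' (Δ s) (p s)
  L2 : ∀ s t, s ≠ t → M.m s t ≠ 0 →
    altProd (Δ s) (Δ t) (M.m s t) = altProd (Δ t) (Δ s) (M.m s t) ∧
    IsLcmPos M' (altProd (Δ s) (Δ t) (M.m s t)) (Δ s) (Δ t)
  L3 : ∀ s t, s ≠ t → M.m s t = 0 →
    (∀ u ∈ p s, ¬ Spherical M' (insert u (p t))) ∧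
    (∀ u ∈ p t, ¬ Spherical M' (insert u (p s)))

def pSetG {M : ArtinMatrix S} {M' : ArtinMatrix S'} (P : LCMHomG M M') (X : Set S) : Set S' :=
  ⋃ s ∈ X, P.p s

/-- FC type: every subset without infinite bonds is of spherical type. -/
def FC (M : ArtinMatrix S) : Prop :=
  ∀ T : Set S, (∀ s ∈ T, ∀ t ∈ T, M.m s t ≠ 0) → Spherical M T

/-- The vertex set of the cube `K(aA_R, aA_T)` of the Deligne complex. -/
def CubeSet (M : ArtinMatrix S) (a : ArtinGroup M) (R T : Set S) :
    Set (Set (ArtinGroup M)) :=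
  {D | ∃ X : Set S, R ⊆ X ∧ X ⊆ T ∧ D = VCoset M a X}

/-- A cube of (the cubical structure of) the Deligne complex. -/
def IsCube (M : ArtinMatrix S) (C : Set (Set (ArtinGroup M))) : Prop :=
  ∃ (a : ArtinGroup M) (R T : Set S), R ⊆ T ∧ Spherical M T ∧ C = CubeSet M a R T

/-- `C` is the span of `K₁` and `K₂`: the smallest cube containing both. -/
def IsSpan (M : ArtinMatrix S) (C K₁ K₂ : Set (Set (ArtinGroup M))) : Prop :=
  IsCube M C ∧ K₁ ⊆ C ∧ K₂ ⊆ C ∧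
    ∀ C', IsCube M C' → K₁ ⊆ C' → K₂ ⊆ C' → C ⊆ C'

/-- The (vertex set of the) star `Et(C)` of a cube: union of all cubes containing `C`. -/
def EtStar (M : ArtinMatrix S) (C : Set (Set (ArtinGroup M))) : Set (Set (ArtinGroup M)) :=
  ⋃₀ {C' | IsCube M C' ∧ C ⊆ C'}

/-- `v 0, …, v n` is a normal cube path with cubes `C 1, …, C n`
(and the degenerate convention `C 0 = {v 0}`). -/
def IsNormalCubePath (M : ArtinMatrix S) (n : ℕ) (v : ℕ → Set (ArtinGroup M))
    (C : ℕ → Set (Set (ArtinGroup M))) : Prop :=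
  (∀ i ≤ n, ∃ (x : ArtinGroup M) (X : Set S), Spherical M X ∧ v i = VCoset M x X) ∧
  C 0 = {v 0} ∧
  (∀ i, 1 ≤ i → i ≤ n → IsSpan M (C i) {v (i - 1)} {v i}) ∧
  (∀ i, i + 1 ≤ n → EtStar M (C i) ∩ C (i + 1) = {v i})

/-- The free monoid on one generator as an Artin monoid. -/
def M1 : ArtinMatrix Unit where
  m _ _ := 1
  symm _ _ := rfl
  diag _ := rfl
  off_ne_one s t h := absurd (Subsingleton.elim s t) h

/-- The free monoid on two generators (`false = x`, `true = y`) as an Artin monoid. -/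
def M2 : ArtinMatrix Bool where
  m s t := if s = t then 1 else 0
  symm s t := by
    show (if s = t then 1 else 0) = (if t = s then 1 else 0)
    by_cases h : s = t
    · rw [if_pos h, if_pos h.symm]
    · rw [if_neg h, if_neg (Ne.symm h)]
  diag s := by show (if s = s then 1 else 0) = 1; simp
  off_ne_one s t h := by show (if s = t then 1 else 0) ≠ 1; simp [h]

lemma mk_append {S : Type*} (M : ArtinMatrix S) (w w' : List S) :
    mk M (w ++ w') = mk M w * mk M w' := by
  show (artinCon M).mk' (FreeMonoid.ofList w * FreeMonoid.ofList w') = _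
  rw [map_mul]; rfl

lemma mk_surjective {S : Type*} (M : ArtinMatrix S) (g : ArtinMonoid M) :
    ∃ w : List S, mk M w = g := by
  obtain ⟨x, hx⟩ := Con.mk'_surjective (c := artinCon M) g
  exact ⟨FreeMonoid.toList x, by
    show (artinCon M).mk' (FreeMonoid.ofList (FreeMonoid.toList x)) = g
    rw [FreeMonoid.ofList_toList]; exact hx⟩

lemma hasSquare_append_right {S : Type*} {w : List S} (h : HasSquare w) (w' : List S) :
    HasSquare (w ++ w') := by
  obtain ⟨a, b, s, rfl⟩ := h
  exact ⟨a, b ++ w', s, by simp⟩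

lemma hasSquare_append_left {S : Type*} {w : List S} (h : HasSquare w) (w' : List S) :
    HasSquare (w' ++ w) := by
  obtain ⟨a, b, s, rfl⟩ := h
  exact ⟨w' ++ a, b, s, by simp⟩

/-- reduced elements are closed under left and right division. -/
theorem stmt2 {S : Type*} [Finite S] (M : ArtinMatrix S)
    (g u v : ArtinMonoid M) (hg : Reduced M g) (huv : g = u * v) :
    Reduced M u ∧ Reduced M v := by
  obtain ⟨wu, hwu⟩ := mk_surjective M u
  obtain ⟨wv, hwv⟩ := mk_surjective M v
  constructor
  · intro w hw hsq
    exact hg (w ++ wv) (by rw [mk_append, hw, hwv, huv]) (hasSquare_append_right hsq wv)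
  · intro w hw hsq
    exact hg (wu ++ w) (by rw [mk_append, hw, hwu, huv]) (hasSquare_append_left hsq wu)

end ArtinPaper
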